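/- arXiv:1911.03342 — 7 statements merged into one kernel-verified Lean document; each statement's English description precedes it below -/
import Mathlib

section
/- Consider the Laplace-domain equations of the two-machine power system at a fixed complex frequency s with s ≠ 0 and s² + Ω² ≠ 0: complex numbers δ₁, δ₂, θ satisfy M·s²·δ₁ = −(δ₁ − θ)/X₁ + d₁, M·s²·δ₂ = −(δ₂ − θ)/X₂ + d₂, and u + (δ₁ − θ)/X₁ + (δ₂ − θ)/X₂ = 0, where d₁, d₂, u are given complex inputs. Then, with G₀ = 1/(s²·M·(s² + Ω²)), N₁ = (X₂/XΣ)·(s² + 1/(M·X₂)), N₂ = (X₁/XΣ)·(s² + 1/(M·X₁)), and N₃ = M·XΣ·N₁·N₂, the (unique) solution is δ₁ = G₀·[(s² + Ω²/2)·d₁ + (Ω²/2)·d₂ + N₁·u], δ₂ = G₀·[(Ω²/2)·d₁ + (s² + Ω²/2)·d₂ + N₂·u], and θ = G₀·[N₁·d₁ + N₂·d₂ + N₃·u]. -/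
/-!
Summing the three network equations gives the power balance `k (δ₁ + δ₂) = d₁ + d₂ + u` with
`k = M s²`, and each machine equation gives `(k Xᵢ + 1) δᵢ = θ + Xᵢ dᵢ`. Eliminating between
these is Cramer's rule for the network, whose determinant (scaled by `X₁ X₂`) is
`k (k XΣ + 2) = M XΣ · s² M (s² + Ω²)`, because `M XΣ Ω² = 2`. Dividing by `M XΣ` turns the
cofactors into the paper's `s² + Ω²/2`, `Ω²/2`, `N₁`, `N₂`, `N₃`.
-/

section StarNetwork

variable {K : Type*} [Field K] {k x₁ x₂ d₁ d₂ u δ₁ δ₂ θ : K}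

theorem star_network_cramer (hx₁ : x₁ ≠ 0) (hx₂ : x₂ ≠ 0)
    (h1 : k * δ₁ = -((δ₁ - θ) / x₁) + d₁) (h2 : k * δ₂ = -((δ₂ - θ) / x₂) + d₂)
    (h3 : u + (δ₁ - θ) / x₁ + (δ₂ - θ) / x₂ = 0) :
    k * (k * (x₁ + x₂) + 2) * δ₁ = (k * (x₁ + x₂) + 1) * d₁ + d₂ + (k * x₂ + 1) * u ∧
    k * (k * (x₁ + x₂) + 2) * δ₂ = d₁ + (k * (x₁ + x₂) + 1) * d₂ + (k * x₁ + 1) * u ∧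
    k * (k * (x₁ + x₂) + 2) * θ =
      (k * x₂ + 1) * d₁ + (k * x₁ + 1) * d₂ + (k * x₁ + 1) * (k * x₂ + 1) * u := by
  have hsum : k * (δ₁ + δ₂) = d₁ + d₂ + u := by linear_combination h1 + h2 - h3
  have hδ₁ : (k * x₁ + 1) * δ₁ = θ + x₁ * d₁ := by
    field_simp at h1; linear_combination h1
  have hδ₂ : (k * x₂ + 1) * δ₂ = θ + x₂ * d₂ := by
    field_simp at h2; linear_combination h2
  refine ⟨?_, ?_, ?_⟩
  · linear_combination (k * x₂ + 1) * hsum + k * hδ₁ - k * hδ₂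
  · linear_combination (k * x₁ + 1) * hsum - k * hδ₁ + k * hδ₂
  · linear_combination
      (k * x₁ + 1) * (k * x₂ + 1) * hsum - k * (k * x₂ + 1) * hδ₁ - k * (k * x₁ + 1) * hδ₂

end StarNetwork

/-- Laplace-domain solution of the two-machine power system:
explicit transfer-function representation of `δ₁`, `δ₂`, `θ`.
Here `Xs = XΣ = X₁ + X₂` and `Ω = √(2/(M·XΣ))`. -/
theorem two_machine_laplace_solution
    (M X₁ X₂ Xs Ω : ℝ) (hM : 0 < M) (hX₁ : 0 < X₁) (hX₂ : 0 < X₂)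
    (hXs : Xs = X₁ + X₂) (hΩ : Ω = Real.sqrt (2 / (M * Xs)))
    (s : ℂ) (hs : s ≠ 0) (hsΩ : s ^ 2 + (Ω : ℂ) ^ 2 ≠ 0)
    (d₁ d₂ u δ₁ δ₂ θ : ℂ)
    (G₀ N₁ N₂ N₃ : ℂ)
    (hG₀ : G₀ = 1 / (s ^ 2 * (M : ℂ) * (s ^ 2 + (Ω : ℂ) ^ 2)))
    (hN₁ : N₁ = ((X₂ : ℂ) / (Xs : ℂ)) * (s ^ 2 + 1 / ((M : ℂ) * (X₂ : ℂ))))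
    (hN₂ : N₂ = ((X₁ : ℂ) / (Xs : ℂ)) * (s ^ 2 + 1 / ((M : ℂ) * (X₁ : ℂ))))
    (hN₃ : N₃ = (M : ℂ) * (Xs : ℂ) * N₁ * N₂)
    (h1 : (M : ℂ) * s ^ 2 * δ₁ = -((δ₁ - θ) / (X₁ : ℂ)) + d₁)
    (h2 : (M : ℂ) * s ^ 2 * δ₂ = -((δ₂ - θ) / (X₂ : ℂ)) + d₂)
    (h3 : u + (δ₁ - θ) / (X₁ : ℂ) + (δ₂ - θ) / (X₂ : ℂ) = 0) :
    δ₁ = G₀ * ((s ^ 2 + (Ω : ℂ) ^ 2 / 2) * d₁ + ((Ω : ℂ) ^ 2 / 2) * d₂ + N₁ * u) ∧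
    δ₂ = G₀ * (((Ω : ℂ) ^ 2 / 2) * d₁ + (s ^ 2 + (Ω : ℂ) ^ 2 / 2) * d₂ + N₂ * u) ∧
    θ = G₀ * (N₁ * d₁ + N₂ * d₂ + N₃ * u) := by
  have hM' : (M : ℂ) ≠ 0 := by exact_mod_cast hM.ne'
  have hX₁' : (X₁ : ℂ) ≠ 0 := by exact_mod_cast hX₁.ne'
  have hX₂' : (X₂ : ℂ) ≠ 0 := by exact_mod_cast hX₂.ne'
  have hXs₀ : 0 < Xs := hXs ▸ add_pos hX₁ hX₂
  have hXs' : (Xs : ℂ) ≠ 0 := by exact_mod_cast hXs₀.ne'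
  have hMXs : (M : ℂ) * Xs ≠ 0 := mul_ne_zero hM' hXs'
  have hΩ' : (M : ℂ) * Xs * Ω ^ 2 = 2 := by
    have : M * Xs * Ω ^ 2 = 2 := by
      rw [hΩ, Real.sq_sqrt (by positivity)]; field_simp
    exact_mod_cast this
  have hN₁' : (M : ℂ) * Xs * N₁ = M * s ^ 2 * X₂ + 1 := by rw [hN₁]; field_simp
  have hN₂' : (M : ℂ) * Xs * N₂ = M * s ^ 2 * X₁ + 1 := by rw [hN₂]; field_simp
  have hN₃' : (M : ℂ) * Xs * N₃ = (M * s ^ 2 * X₁ + 1) * (M * s ^ 2 * X₂ + 1) := by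
    rw [hN₃]; linear_combination (M * Xs * N₂) * hN₁' + (M * s ^ 2 * X₂ + 1) * hN₂'
  have hsolve : ∀ {y P : ℂ}, M * s ^ 2 * (M * s ^ 2 * Xs + 2) * y = M * Xs * P → y = G₀ * P := by
    intro y P h
    rw [hG₀, one_div, eq_inv_mul_iff_mul_eq₀ (by simp [hs, hM', hsΩ])]
    apply mul_left_cancel₀ hMXs
    linear_combination h + M * s ^ 2 * y * hΩ'
  obtain ⟨e₁, e₂, e₃⟩ := star_network_cramer hX₁' hX₂' h1 h2 h3
  rw [← Complex.ofReal_add, ← hXs] at e₁ e₂ e₃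
  refine ⟨hsolve ?_, hsolve ?_, hsolve ?_⟩
  · linear_combination e₁ - (d₁ + d₂) / 2 * hΩ' - u * hN₁'
  · linear_combination e₂ - (d₁ + d₂) / 2 * hΩ' - u * hN₂'
  · linear_combination e₃ - d₁ * hN₁' - d₂ * hN₂' - u * hN₃'
end

section
/- Consider the Laplace-domain equations of the two-machine power system at a fixed complex frequency s with s ≠ 0 and s² + Ω² ≠ 0, with zero load disturbances: complex numbers δ₁, δ₂, θ satisfy M·s²·δ₁ = −(δ₁ − θ)/X₁, M·s²·δ₂ = −(δ₂ − θ)/X₂, and u + (δ₁ − θ)/X₁ + (δ₂ − θ)/X₂ = 0 for a given complex input u. Then the relative machine speed z = s·(δ₁ − δ₂) satisfies z = ((X₂ − X₁)/(M·XΣ)) · (s/(s² + Ω²)) · u; that is, the transfer function from the controlled power injection u to the relative machine speed is G_zu(s) = ((X₂ − X₁)/(M·XΣ)) · s/(s² + Ω²). -/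
/-- Transfer function from the controlled power injection `u` to the relative
machine speed `z = s·(δ₁ − δ₂)` in the two-machine power system:
`G_zu(s) = ((X₂ − X₁)/(M·XΣ)) · s/(s² + Ω²)`. Here `Xs = XΣ = X₁ + X₂`. -/
theorem two_machine_Gzu
    (M X₁ X₂ Xs Ω : ℝ) (hM : 0 < M) (hX₁ : 0 < X₁) (hX₂ : 0 < X₂)
    (hXs : Xs = X₁ + X₂) (hΩ : Ω = Real.sqrt (2 / (M * Xs)))
    (s : ℂ) (hs : s ≠ 0) (hsΩ : s ^ 2 + (Ω : ℂ) ^ 2 ≠ 0)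
    (u δ₁ δ₂ θ : ℂ)
    (h1 : (M : ℂ) * s ^ 2 * δ₁ = -((δ₁ - θ) / (X₁ : ℂ)))
    (h2 : (M : ℂ) * s ^ 2 * δ₂ = -((δ₂ - θ) / (X₂ : ℂ)))
    (h3 : u + (δ₁ - θ) / (X₁ : ℂ) + (δ₂ - θ) / (X₂ : ℂ) = 0) :
    s * (δ₁ - δ₂) =
      (((X₂ : ℂ) - (X₁ : ℂ)) / ((M : ℂ) * (Xs : ℂ))) * (s / (s ^ 2 + (Ω : ℂ) ^ 2)) * u := by
  have hM0 : (M : ℂ) ≠ 0 := by exact_mod_cast hM.ne'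
  have hX10 : (X₁ : ℂ) ≠ 0 := by exact_mod_cast hX₁.ne'
  have hX20 : (X₂ : ℂ) ≠ 0 := by exact_mod_cast hX₂.ne'
  have hXs0R : (0:ℝ) < Xs := by rw [hXs]; positivity
  have hXs0 : (Xs : ℂ) ≠ 0 := by exact_mod_cast hXs0R.ne'
  have hXsC : (Xs : ℂ) = (X₁ : ℂ) + X₂ := by exact_mod_cast hXs
  have hΩ2 : ((Ω : ℂ)) ^ 2 = 2 / ((M : ℂ) * Xs) := by
    have : Ω ^ 2 = 2 / (M * Xs) := by
      rw [hΩ, Real.sq_sqrt (by positivity)]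
    exact_mod_cast congrArg (fun x : ℝ => (x : ℂ)) this
  field_simp at h1 h2 h3
  -- clean form of the resonance identity, with denominators cleared
  have key : ((X₁:ℂ)*X₂) * ((M:ℂ)*(Xs:ℂ)*s^2*(δ₁-δ₂) + 2*(δ₁-δ₂)) =
      ((X₁:ℂ)*X₂) * (((X₂:ℂ)-X₁)*u) := by
    rw [hXsC]
    linear_combination ((X₂:ℂ)*((X₁:ℂ)+X₂)) * h1 - ((X₁:ℂ)*((X₁:ℂ)+X₂)) * h2 -
      (((X₂:ℂ)-X₁)) * h3
  have key' : (M:ℂ)*(Xs:ℂ)*s^2*(δ₁-δ₂) + 2*(δ₁-δ₂) = ((X₂:ℂ)-X₁)*u :=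
    mul_left_cancel₀ (mul_ne_zero hX10 hX20) key
  -- denominator manipulation
  have hD : ((M:ℂ)*(Xs:ℂ)) * (s^2 + (Ω:ℂ)^2) = (M:ℂ)*(Xs:ℂ)*s^2 + 2 := by
    rw [hΩ2]; field_simp
  have hDne : (M:ℂ)*(Xs:ℂ)*s^2 + 2 ≠ 0 := by
    rw [← hD]; exact mul_ne_zero (mul_ne_zero hM0 hXs0) hsΩ
  rw [div_mul_div_comm, div_mul_eq_mul_div, hD, eq_div_iff hDne]
  linear_combination s * key'
end

section
/- For any real a > 0 and Ω > 0, the improper integral ∫₀^∞ (1/2)·ln( (Ω² − ω²)² / ((Ω² − ω²)² + a²·ω²) ) dω converges and equals −π·a/2. Equivalently, the sensitivity function S(s) = (s² + Ω²)/(s² + a·s + Ω²) obtained by proportional feedback on the undamped oscillator satisfies ∫₀^∞ ln |S(iω)| dω = −π·a/2. -/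
/-!
Write `s² + a s + Ω² = (s + c₁ - iτ)(s + c₂ + iτ)` with `c₁, c₂ > 0` and `τ (c₁ - c₂) = 0`
(conjugate roots when `a < 2Ω`, real roots otherwise). Then `|S(iω)|²` is a quotient of factors
`(ω - b)² + c²`, and `log((ω - b)² + c²)` has the elementary primitive
`(ω - b) log((ω - b)² + c²) - 2(ω - b) + 2c arctan((ω - b)/c)`, continuous even for `c = 0`.
The resulting primitive of the integrand vanishes at `0` by oddness, and at infinity the
`x log x` growth of the four factors cancels while each arctan contributes `π c / 2`, giving
`-π (c₁ + c₂) / 2 = -π a / 2`. The integrand is `≤ 0`, so integrability on `(0, ∞)` follows from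
the existence of this limit.
-/

open MeasureTheory Filter Set Topology Real

-- For `c = 0` the arctan term vanishes (`x / 0 = 0`), leaving the primitive `x log x² - 2x`.
noncomputable def logQuadraticPrimitive (c x : ℝ) : ℝ :=
  x * log (x ^ 2 + c ^ 2) - 2 * x + 2 * c * arctan (x / c)

theorem hasDerivAt_logQuadraticPrimitive {c x : ℝ} (h : x ^ 2 + c ^ 2 ≠ 0) :
    HasDerivAt (logQuadraticPrimitive c) (log (x ^ 2 + c ^ 2)) x := by
  have hq : HasDerivAt (fun x : ℝ => x ^ 2 + c ^ 2) (2 * x) x := by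
    simpa using (hasDerivAt_pow 2 x).add_const (c ^ 2)
  have harc : HasDerivAt (fun x => arctan (x / c)) (1 / (1 + (x / c) ^ 2) * (1 / c)) x :=
    (hasDerivAt_arctan _).comp x ((hasDerivAt_id x).div_const c)
  have := (((hasDerivAt_id x).mul (hq.log h)).sub ((hasDerivAt_id x).const_mul 2)).add
    (harc.const_mul (2 * c))
  refine this.congr_deriv ?_
  simp only [id]
  rcases eq_or_ne c 0 with rfl | hc
  · have hx : x ≠ 0 := by simpa using h
    field_simp
    ring
  · field_simp
    ring

theorem continuous_logQuadraticPrimitive (c : ℝ) : Continuous (logQuadraticPrimitive c) := by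
  have hlog : Continuous fun x : ℝ => x * log (x ^ 2 + c ^ 2) := by
    rcases eq_or_ne c 0 with rfl | hc
    · refine (continuous_mul_log.const_mul 2).congr fun x => ?_
      simp only [ne_eq, OfNat.ofNat_ne_zero, not_false_eq_true, zero_pow, add_zero, log_pow]
      ring
    · exact continuous_id.mul ((continuous_pow 2).add continuous_const |>.log
        fun x => (add_pos_of_nonneg_of_pos (sq_nonneg x) (by positivity)).ne')
  unfold logQuadraticPrimitive
  fun_prop

theorem logQuadraticPrimitive_neg (c x : ℝ) :
    logQuadraticPrimitive c (-x) = -logQuadraticPrimitive c x := by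
  simp only [logQuadraticPrimitive, neg_sq, neg_div, arctan_neg]
  ring

theorem tendsto_mul_log_sq_add_sq_div_sq (b c : ℝ) :
    Tendsto (fun ω => (ω - b) * log (((ω - b) ^ 2 + c ^ 2) / ω ^ 2)) atTop (𝓝 (-2 * b)) := by
  have hlin : Tendsto (fun ω : ℝ => ω * ((-2 * b + (b ^ 2 + c ^ 2) * ω⁻¹) * ω⁻¹))
      atTop (𝓝 (-2 * b)) := by
    have := tendsto_const_nhds (x := -2 * b).add (tendsto_inv_atTop_zero.const_mul (b ^ 2 + c ^ 2))
    rw [mul_zero, add_zero] at this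
    refine this.congr' ?_
    filter_upwards [eventually_ne_atTop 0] with ω hω
    field_simp
  have hfactor : Tendsto (fun ω : ℝ => 1 - b * ω⁻¹) atTop (𝓝 1) := by
    simpa using (tendsto_inv_atTop_zero.const_mul b).const_sub 1
  have := (tendsto_mul_log_one_add_of_tendsto hlin).mul hfactor
  rw [mul_one] at this
  refine this.congr' ?_
  filter_upwards [eventually_ne_atTop 0] with ω hω
  rw [show ((ω - b) ^ 2 + c ^ 2) / ω ^ 2 = 1 + (-2 * b + (b ^ 2 + c ^ 2) * ω⁻¹) * ω⁻¹ by
    field_simp; ring]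
  field_simp

theorem tendsto_mul_arctan_sub_div_atTop (b : ℝ) {c : ℝ} (hc : 0 ≤ c) :
    Tendsto (fun ω => c * arctan ((ω - b) / c)) atTop (𝓝 (c * (π / 2))) := by
  rcases hc.eq_or_lt with rfl | hc
  · simp
  refine tendsto_const_nhds.mul ((tendsto_arctan_atTop.mono_right nhdsWithin_le_nhds).comp ?_)
  exact (tendsto_atTop_add_const_right _ (-b) tendsto_id).atTop_div_const hc

theorem tendsto_logQuadraticPrimitive_sub (b : ℝ) {c : ℝ} (hc : 0 ≤ c) :
    Tendsto (fun ω => logQuadraticPrimitive c (ω - b) - ((ω - b) * log (ω ^ 2) - 2 * (ω - b)))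
      atTop (𝓝 (-2 * b + π * c)) := by
  have := (tendsto_mul_log_sq_add_sq_div_sq b c).add
    ((tendsto_mul_arctan_sub_div_atTop b hc).const_mul 2)
  rw [show 2 * (c * (π / 2)) = π * c by ring] at this
  refine this.congr' ?_
  filter_upwards [eventually_gt_atTop (max b 0)] with ω hω
  have hω : 0 < ω - b := by linarith [le_max_left b 0]
  have hω0 : ω ≠ 0 := by linarith [le_max_right b 0]
  rw [log_div (by positivity) (by positivity), logQuadraticPrimitive]
  ring

theorem integrableOn_Ioi_and_integral_eq_of_hasDerivAt_of_ne {f f' : ℝ → ℝ} {a p l : ℝ}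
    (hap : a < p) (hf : ContinuousOn f (Ici a))
    (hderiv : ∀ x ∈ Ioi a, x ≠ p → HasDerivAt f (f' x) x) (hf' : ∀ x ∈ Ioi a, f' x ≤ 0)
    (hl : Tendsto f atTop (𝓝 l)) :
    IntegrableOn f' (Ioi a) ∧ ∫ x in Ioi a, f' x = l - f a := by
  have hIcc : ContinuousOn f (Icc a p) := hf.mono Icc_subset_Ici_self
  have hleft : IntegrableOn f' (Ioc a p) := by
    refine integrable_neg_iff.1 (intervalIntegral.integrableOn_deriv_of_nonneg hIcc.neg
      (fun x hx => (hderiv x hx.1 hx.2.ne).neg) fun x hx => ?_)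
    exact neg_nonneg.2 (hf' x hx.1)
  have hleft_eq : ∫ x in Ioc a p, f' x = f p - f a := by
    rw [← intervalIntegral.integral_of_le hap.le]
    exact intervalIntegral.integral_eq_sub_of_hasDeriv_right_of_le hap.le hIcc
      (fun x hx => (hderiv x hx.1 hx.2.ne).hasDerivWithinAt)
      ((intervalIntegrable_iff_integrableOn_Ioc_of_le hap.le).2 hleft)
  have hcont_p : ContinuousWithinAt f (Ici p) p :=
    (hf.mono (Ici_subset_Ici.2 hap.le)).continuousWithinAt self_mem_Ici
  have hderiv_p : ∀ x ∈ Ioi p, HasDerivAt f (f' x) x :=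
    fun x hx => hderiv x (hap.trans hx) (ne_of_gt hx)
  have hf'_p : ∀ x ∈ Ioi p, f' x ≤ 0 := fun x hx => hf' x (hap.trans hx)
  have hright := integrableOn_Ioi_deriv_of_nonpos hcont_p hderiv_p hf'_p hl
  have hsplit : Ioc a p ∪ Ioi p = Ioi a := Ioc_union_Ioi_eq_Ioi hap.le
  refine ⟨hsplit ▸ hleft.union hright, ?_⟩
  rw [← hsplit, setIntegral_union (Ioc_disjoint_Ioi le_rfl) measurableSet_Ioi hleft hright,
    hleft_eq, integral_Ioi_of_hasDerivAt_of_nonpos hcont_p hderiv_p hf'_p hl]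
  ring

theorem sq_sub_sq_sq_add_mul_sq_eq_mul {Ω τ c₁ c₂ : ℝ} (hprod : c₁ * c₂ + τ ^ 2 = Ω ^ 2)
    (hsym : τ * (c₁ - c₂) = 0) (ω : ℝ) :
    (Ω ^ 2 - ω ^ 2) ^ 2 + (c₁ + c₂) ^ 2 * ω ^ 2 =
      ((ω - τ) ^ 2 + c₁ ^ 2) * ((ω + τ) ^ 2 + c₂ ^ 2) := by
  rw [← hprod]
  linear_combination (-(τ * (c₁ - c₂) + 2 * ω * (c₁ + c₂))) * hsym

theorem exists_root_params {a Ω : ℝ} (ha : 0 < a) (hΩ : 0 < Ω) :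
    ∃ τ c₁ c₂ : ℝ, 0 < c₁ ∧ 0 < c₂ ∧ c₁ + c₂ = a ∧ c₁ * c₂ + τ ^ 2 = Ω ^ 2 ∧
      τ * (c₁ - c₂) = 0 := by
  rcases le_or_gt (a ^ 2) (4 * Ω ^ 2) with h | h
  · refine ⟨√(4 * Ω ^ 2 - a ^ 2) / 2, a / 2, a / 2, by positivity, by positivity, by ring, ?_,
      by ring⟩
    rw [div_pow, sq_sqrt (by linarith)]
    ring
  · have hs : √(a ^ 2 - 4 * Ω ^ 2) ^ 2 = a ^ 2 - 4 * Ω ^ 2 := sq_sqrt (by linarith)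
    have hlt : √(a ^ 2 - 4 * Ω ^ 2) < a := (sqrt_lt' ha).2 (by nlinarith)
    refine ⟨0, (a - √(a ^ 2 - 4 * Ω ^ 2)) / 2, (a + √(a ^ 2 - 4 * Ω ^ 2)) / 2, by linarith,
      by positivity, by ring, ?_, by ring⟩
    linear_combination (-1 / 4 : ℝ) * hs

noncomputable def bodePrimitive (Ω τ c₁ c₂ ω : ℝ) : ℝ :=
  (1 / 2) * (logQuadraticPrimitive 0 (ω - Ω) + logQuadraticPrimitive 0 (ω + Ω) -
    logQuadraticPrimitive c₁ (ω - τ) - logQuadraticPrimitive c₂ (ω + τ))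

section bodePrimitive

variable {Ω τ c₁ c₂ : ℝ}

theorem continuous_bodePrimitive : Continuous (bodePrimitive Ω τ c₁ c₂) := by
  have := continuous_logQuadraticPrimitive
  unfold bodePrimitive
  fun_prop

theorem hasDerivAt_bodePrimitive (hc₁ : c₁ ≠ 0) (hc₂ : c₂ ≠ 0)
    (hprod : c₁ * c₂ + τ ^ 2 = Ω ^ 2) (hsym : τ * (c₁ - c₂) = 0) {ω : ℝ} (hω : ω ^ 2 ≠ Ω ^ 2) :
    HasDerivAt (bodePrimitive Ω τ c₁ c₂)
      ((1 / 2) * log ((Ω ^ 2 - ω ^ 2) ^ 2 / ((Ω ^ 2 - ω ^ 2) ^ 2 + (c₁ + c₂) ^ 2 * ω ^ 2))) ω := by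
  have hN : Ω ^ 2 - ω ^ 2 ≠ 0 := sub_ne_zero.2 (Ne.symm hω)
  have hN₁ : (ω - Ω) ^ 2 + 0 ^ 2 ≠ 0 := by
    have : ω - Ω ≠ 0 := fun h => hN (by linear_combination (-(ω + Ω)) * h)
    positivity
  have hN₂ : (ω + Ω) ^ 2 + 0 ^ 2 ≠ 0 := by
    have : ω + Ω ≠ 0 := fun h => hN (by linear_combination (-(ω - Ω)) * h)
    positivity
  have hD₁ : (ω - τ) ^ 2 + c₁ ^ 2 ≠ 0 := by positivity
  have hD₂ : (ω + τ) ^ 2 + c₂ ^ 2 ≠ 0 := by positivity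
  have := ((((hasDerivAt_logQuadraticPrimitive hN₁).comp_sub_const ω Ω).add
    ((hasDerivAt_logQuadraticPrimitive hN₂).comp_add_const ω Ω)).sub
    ((hasDerivAt_logQuadraticPrimitive hD₁).comp_sub_const ω τ)).sub
    ((hasDerivAt_logQuadraticPrimitive hD₂).comp_add_const ω τ) |>.const_mul (1 / 2)
  refine this.congr_deriv ?_
  rw [sq_sub_sq_sq_add_mul_sq_eq_mul hprod hsym, log_div, log_mul hD₁ hD₂,
    show (Ω ^ 2 - ω ^ 2) ^ 2 = ((ω - Ω) ^ 2 + 0 ^ 2) * ((ω + Ω) ^ 2 + 0 ^ 2) by ring,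
    log_mul hN₁ hN₂]
  · ring
  · exact pow_ne_zero 2 hN
  · exact mul_ne_zero hD₁ hD₂

theorem tendsto_bodePrimitive (hc₁ : 0 ≤ c₁) (hc₂ : 0 ≤ c₂) :
    Tendsto (bodePrimitive Ω τ c₁ c₂) atTop (𝓝 (-(π * (c₁ + c₂) / 2))) := by
  have := ((((tendsto_logQuadraticPrimitive_sub Ω le_rfl).add
    (tendsto_logQuadraticPrimitive_sub (-Ω) le_rfl)).sub
    (tendsto_logQuadraticPrimitive_sub τ hc₁)).sub
    (tendsto_logQuadraticPrimitive_sub (-τ) hc₂)).const_mul (1 / 2)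
  convert this using 2 with ω
  · simp only [bodePrimitive, sub_neg_eq_add]
    ring
  · ring

theorem bodePrimitive_zero (hsym : τ * (c₁ - c₂) = 0) : bodePrimitive Ω τ c₁ c₂ 0 = 0 := by
  rcases mul_eq_zero.1 hsym with rfl | h
  · simp [bodePrimitive, logQuadraticPrimitive]
  · simp only [bodePrimitive, sub_eq_zero.1 h, zero_add, zero_sub, logQuadraticPrimitive_neg]
    ring

end bodePrimitive

/-- Bode integral of the sensitivity `S(s) = (s² + Ω²)/(s² + a·s + Ω²)` obtained by
proportional feedback on the undamped oscillator:
`∫₀^∞ ln |S(iω)| dω = −π·a/2`, written out via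
`ln |S(iω)| = (1/2)·ln((Ω² − ω²)²/((Ω² − ω²)² + a²·ω²))`. -/
theorem bode_integral_undamped_oscillator (a Ω : ℝ) (ha : 0 < a) (hΩ : 0 < Ω) :
    IntegrableOn
      (fun ω : ℝ => (1 / 2) * Real.log
        ((Ω ^ 2 - ω ^ 2) ^ 2 / ((Ω ^ 2 - ω ^ 2) ^ 2 + a ^ 2 * ω ^ 2))) (Set.Ioi 0) ∧
    ∫ ω in Set.Ioi (0 : ℝ), (1 / 2) * Real.log
        ((Ω ^ 2 - ω ^ 2) ^ 2 / ((Ω ^ 2 - ω ^ 2) ^ 2 + a ^ 2 * ω ^ 2)) =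
      -(Real.pi * a / 2) := by
  obtain ⟨τ, c₁, c₂, hc₁, hc₂, rfl, hprod, hsym⟩ := exists_root_params ha hΩ
  have hderiv : ∀ ω ∈ Ioi (0 : ℝ), ω ≠ Ω → HasDerivAt (bodePrimitive Ω τ c₁ c₂)
      ((1 / 2) * log ((Ω ^ 2 - ω ^ 2) ^ 2 / ((Ω ^ 2 - ω ^ 2) ^ 2 + (c₁ + c₂) ^ 2 * ω ^ 2))) ω :=
    fun ω hω hne => hasDerivAt_bodePrimitive hc₁.ne' hc₂.ne' hprod hsym fun h =>
      hne ((pow_left_inj₀ (le_of_lt hω) hΩ.le two_ne_zero).1 h)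
  have hnonpos : ∀ ω ∈ Ioi (0 : ℝ),
      (1 / 2) * log ((Ω ^ 2 - ω ^ 2) ^ 2 / ((Ω ^ 2 - ω ^ 2) ^ 2 + (c₁ + c₂) ^ 2 * ω ^ 2)) ≤ 0 :=
    fun ω _ => mul_nonpos_of_nonneg_of_nonpos (by norm_num) (log_nonpos (by positivity)
      (div_le_one_of_le₀ (le_add_of_nonneg_right (by positivity)) (by positivity)))
  have := integrableOn_Ioi_and_integral_eq_of_hasDerivAt_of_ne hΩ
    continuous_bodePrimitive.continuousOn hderiv hnonpos (tendsto_bodePrimitive hc₁.le hc₂.le)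
  rwa [bodePrimitive_zero hsym, sub_zero] at this
end

section
/- (Filtering limitation with local phase angle measurement — necessity.) Let M > 0, 0 < X₁ < X₂, XΣ = X₁ + X₂, r₁ = 1/(M·X₂), r₂ = 1/(M·X₁), and let ω > 0. For any complex number c (the value F(iω) of a filter at s = iω), define the complementary filtering sensitivities at s = iω by M₁ = c·(X₂/XΣ)·((iω)² + r₁)/(iω)³ and M₂ = −c·(X₁/XΣ)·((iω)² + r₂)/(iω)³, and the filtering sensitivities P₁ = 1 − M₁, P₂ = 1 − M₂. If |P₁| < 1 and |P₂| < 1, then r₁ < ω² < r₂, i.e., ω lies strictly between |q₁| = √r₁ and |q₂| = √r₂. -/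
/-!
At `s = iω` the factor `(s² + r)/s³` equals `i (r - ω²)/ω³`, so both complementary sensitivities
are `i c` times a real number: `M₁ = i c k₁` and `M₂ = -i c k₂` with
`k₁ = (X₂/XΣ)(r₁ - ω²)/ω³`, `k₂ = (X₁/XΣ)(r₂ - ω²)/ω³`. A sensitivity `|1 - Mⱼ| < 1` forces `Re Mⱼ > 0`, i.e.
`-k₁ Im c > 0` and `k₂ Im c > 0`, hence `k₁ k₂ < 0`. Since the prefactors are nonnegative this
says `(r₁ - ω²)(r₂ - ω²) < 0`, and as `r₁ < r₂` the frequency `ω²` lies strictly between them.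
-/

open Complex

theorem Complex.re_pos_of_norm_one_sub_lt_one {z : ℂ} (h : ‖1 - z‖ < 1) : 0 < z.re := by
  have : 1 - z.re < 1 := calc
    1 - z.re ≤ |(1 - z).re| := by simpa using le_abs_self (1 - z.re)
    _ ≤ ‖1 - z‖ := abs_re_le_norm _
    _ < 1 := h
  linarith

-- Also valid at `ω = 0`, where both sides are `0` since `x / 0 = 0`.
theorem mul_sq_add_div_pow_three_at_I_mul (c : ℂ) (a r ω : ℝ) :
    c * a * ((I * ω) ^ 2 + r) / (I * ω) ^ 3 = I * c * ↑(a * (r - ω ^ 2) / ω ^ 3) := by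
  rw [mul_pow, mul_pow, I_sq, I_pow_three, div_eq_mul_inv, mul_inv, inv_neg, inv_I]
  push_cast
  ring

theorem mul_neg_of_re_I_mul_pos {c : ℂ} {k₁ k₂ : ℝ} (h₁ : 0 < (I * c * k₁).re)
    (h₂ : 0 < (-(I * c * k₂)).re) : k₁ * k₂ < 0 := by
  simp only [neg_re, mul_re, I_re, I_im, ofReal_re, ofReal_im, mul_im, zero_mul, one_mul,
    mul_zero, zero_sub, sub_zero, zero_add] at h₁ h₂
  nlinarith [mul_pos h₁ h₂, sq_nonneg c.im]

theorem lt_and_lt_of_sub_mul_sub_neg {α : Type*} [Ring α] [LinearOrder α] [IsStrictOrderedRing α]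
    {a b x : α} (hab : a < b) (h : (a - x) * (b - x) < 0) : a < x ∧ x < b := by
  rcases mul_neg_iff.mp h with ⟨ha, hb⟩ | ⟨ha, hb⟩
  · exact absurd ((sub_neg.mp hb).trans (sub_pos.mp ha)) hab.not_gt
  · exact ⟨sub_neg.mp ha, sub_pos.mp hb⟩

theorem local_phase_filtering_limitation_necessity_general
    (M X₁ X₂ Xs r₁ r₂ : ℝ) (hM : 0 < M) (hX₁ : 0 < X₁) (hX₁₂ : X₁ < X₂)
    (hr₁ : r₁ = 1 / (M * X₂)) (hr₂ : r₂ = 1 / (M * X₁))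
    (ω : ℝ) (c : ℂ)
    (M₁ M₂ P₁ P₂ : ℂ)
    (hM₁ : M₁ = c * ((X₂ : ℂ) / (Xs : ℂ)) * ((Complex.I * ω) ^ 2 + (r₁ : ℂ)) / (Complex.I * ω) ^ 3)
    (hM₂ : M₂ = -(c * ((X₁ : ℂ) / (Xs : ℂ)) * ((Complex.I * ω) ^ 2 + (r₂ : ℂ)) / (Complex.I * ω) ^ 3))
    (hP₁ : P₁ = 1 - M₁) (hP₂ : P₂ = 1 - M₂)
    (h1 : ‖P₁‖ < 1) (h2 : ‖P₂‖ < 1) :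
    r₁ < ω ^ 2 ∧ ω ^ 2 < r₂ := by
  have hX₂ : 0 < X₂ := hX₁.trans hX₁₂
  rw [← ofReal_div, mul_sq_add_div_pow_three_at_I_mul] at hM₁ hM₂
  have hk : X₂ / Xs * (r₁ - ω ^ 2) / ω ^ 3 * (X₁ / Xs * (r₂ - ω ^ 2) / ω ^ 3) < 0 :=
    mul_neg_of_re_I_mul_pos (hM₁ ▸ re_pos_of_norm_one_sub_lt_one (hP₁ ▸ h1))
      (hM₂ ▸ re_pos_of_norm_one_sub_lt_one (hP₂ ▸ h2))
  have hsign : (r₁ - ω ^ 2) * (r₂ - ω ^ 2) < 0 := by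
    refine neg_of_mul_neg_right (a := X₁ * X₂ / (Xs * ω ^ 3) ^ 2) ?_ (by positivity)
    linear_combination hk
  have hr : r₁ < r₂ := by
    rw [hr₁, hr₂]
    exact one_div_lt_one_div_of_lt (by positivity) (mul_lt_mul_of_pos_left hX₁₂ hM)
  exact lt_and_lt_of_sub_mul_sub_neg hr hsign

/-- Filtering limitation with local phase angle measurement (necessity):
if at frequency `ω > 0` the filtering sensitivities
`P₁ = 1 − M₁`, `P₂ = 1 − M₂` with
`M₁ = c·(X₂/XΣ)·((iω)² + r₁)/(iω)³`, `M₂ = −c·(X₁/XΣ)·((iω)² + r₂)/(iω)³`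
both satisfy `|Pᵢ| < 1`, then `r₁ < ω² < r₂`, i.e. `ω` lies strictly between
`|q₁| = √r₁` and `|q₂| = √r₂`. Here `Xs = XΣ = X₁ + X₂`, `r₁ = 1/(M·X₂)`,
`r₂ = 1/(M·X₁)`. -/
theorem local_phase_filtering_limitation_necessity
    (M X₁ X₂ Xs r₁ r₂ : ℝ) (hM : 0 < M) (hX₁ : 0 < X₁) (hX₁₂ : X₁ < X₂)
    (hXs : Xs = X₁ + X₂) (hr₁ : r₁ = 1 / (M * X₂)) (hr₂ : r₂ = 1 / (M * X₁))
    (ω : ℝ) (hω : 0 < ω) (c : ℂ)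
    (M₁ M₂ P₁ P₂ : ℂ)
    (hM₁ : M₁ = c * ((X₂ : ℂ) / (Xs : ℂ)) * ((Complex.I * ω) ^ 2 + (r₁ : ℂ)) / (Complex.I * ω) ^ 3)
    (hM₂ : M₂ = -(c * ((X₁ : ℂ) / (Xs : ℂ)) * ((Complex.I * ω) ^ 2 + (r₂ : ℂ)) / (Complex.I * ω) ^ 3))
    (hP₁ : P₁ = 1 - M₁) (hP₂ : P₂ = 1 - M₂)
    (h1 : ‖P₁‖ < 1) (h2 : ‖P₂‖ < 1) :
    r₁ < ω ^ 2 ∧ ω ^ 2 < r₂ :=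
  local_phase_filtering_limitation_necessity_general M X₁ X₂ Xs r₁ r₂ hM hX₁ hX₁₂ hr₁ hr₂ ω c M₁ M₂
    P₁ P₂ hM₁ hM₂ hP₁ hP₂ h1 h2
end

section
/- (Filtering limitation with local phase angle measurement — achievability inside the interval.) Let M > 0, 0 < X₁ < X₂, XΣ = X₁ + X₂, r₁ = 1/(M·X₂), r₂ = 1/(M·X₁), and let ω > 0 satisfy r₁ < ω² < r₂. Then there exists a complex number c such that, with M₁ = c·(X₂/XΣ)·((iω)² + r₁)/(iω)³, M₂ = −c·(X₁/XΣ)·((iω)² + r₂)/(iω)³, P₁ = 1 − M₁ and P₂ = 1 − M₂, one has |P₁| < 1 and |P₂| < 1. (For example, a suitable purely imaginary c = iβ with β > 0 small makes both M₁ and M₂ real and in (0, 2).) -/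
/-!
For a purely imaginary `c = β i`, since `(iω)² + r = r − ω²` and `(iω)³ = −iω³`, both
`M₁ = β (X₂/XΣ)(ω² − r₁)/ω³` and `M₂ = β (X₁/XΣ)(r₂ − ω²)/ω³` are real, and positive exactly
when `r₁ < ω² < r₂`. A small `β > 0` then puts both in `(0, 1)`, so `|1 − Mᵢ| < 1`.
-/

open Complex

theorem ofReal_mul_I_mul_div_I_mul_pow_three (β k r ω : ℝ) :
    (β * I) * (k : ℂ) * ((I * ω) ^ 2 + (r : ℂ)) / (I * ω) ^ 3
      = ((β * (k * (ω ^ 2 - r) / ω ^ 3) : ℝ) : ℂ) := by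
  rcases eq_or_ne ω 0 with rfl | hω
  · simp
  have hω' : (ω : ℂ) ≠ 0 := ofReal_ne_zero.mpr hω
  push_cast
  field_simp
  ring_nf
  simp only [I_sq]
  ring

theorem norm_one_sub_ofReal_lt_one {m : ℝ} (h0 : 0 < m) (h2 : m < 2) :
    ‖1 - (m : ℂ)‖ < 1 := by
  rw [← ofReal_one, ← ofReal_sub, norm_real, Real.norm_eq_abs, abs_lt]
  constructor <;> linarith

theorem exists_pos_mul_lt_one_and_mul_lt_one {a b : ℝ} (ha : 0 < a) (hb : 0 < b) :
    ∃ β : ℝ, (0 < β * a ∧ β * a < 1) ∧ (0 < β * b ∧ β * b < 1) := by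
  refine ⟨1 / (a + b), ⟨by positivity, ?_⟩, ⟨by positivity, ?_⟩⟩ <;>
    rw [div_mul_eq_mul_div, one_mul, div_lt_one (by positivity)] <;> linarith

theorem local_phase_filtering_achievability_general
    (X₁ X₂ Xs r₁ r₂ : ℝ) (hX₁ : 0 < X₁) (hX₁₂ : X₁ < X₂)
    (hXs : Xs = X₁ + X₂)
    (ω : ℝ) (hω : 0 < ω) (hlo : r₁ < ω ^ 2) (hhi : ω ^ 2 < r₂) :
    ∃ c : ℂ,
      ‖(1 - c * ((X₂ : ℂ) / (Xs : ℂ)) *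
        ((Complex.I * ω) ^ 2 + (r₁ : ℂ)) / (Complex.I * ω) ^ 3)‖ < 1 ∧
      ‖(1 - -(c * ((X₁ : ℂ) / (Xs : ℂ)) *
        ((Complex.I * ω) ^ 2 + (r₂ : ℂ)) / (Complex.I * ω) ^ 3))‖ < 1 := by
  have hXs0 : 0 < Xs := by linarith
  have ha : 0 < X₂ / Xs * (ω ^ 2 - r₁) / ω ^ 3 :=
    div_pos (mul_pos (div_pos (by linarith) hXs0) (by linarith)) (by positivity)
  have hb : 0 < X₁ / Xs * (r₂ - ω ^ 2) / ω ^ 3 :=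
    div_pos (mul_pos (div_pos hX₁ hXs0) (by linarith)) (by positivity)
  obtain ⟨β, ⟨ha0, ha1⟩, ⟨hb0, hb1⟩⟩ := exists_pos_mul_lt_one_and_mul_lt_one ha hb
  refine ⟨β * I, ?_, ?_⟩
  · rw [← ofReal_div, ofReal_mul_I_mul_div_I_mul_pow_three]
    exact norm_one_sub_ofReal_lt_one ha0 (by linarith)
  · rw [← ofReal_div, ofReal_mul_I_mul_div_I_mul_pow_three, ← ofReal_neg]
    refine norm_one_sub_ofReal_lt_one ?_ ?_ <;>
      linarith [show -(β * (X₁ / Xs * (ω ^ 2 - r₂) / ω ^ 3))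
        = β * (X₁ / Xs * (r₂ - ω ^ 2) / ω ^ 3) by ring]

/-- Filtering limitation with local phase angle measurement (achievability inside
the interval): if `r₁ < ω² < r₂` at a frequency `ω > 0`, then there exists a
filter value `c = F(iω)` such that both filtering sensitivities
`P₁ = 1 − M₁`, `P₂ = 1 − M₂` satisfy `|Pᵢ| < 1`, where
`M₁ = c·(X₂/XΣ)·((iω)² + r₁)/(iω)³` and `M₂ = −c·(X₁/XΣ)·((iω)² + r₂)/(iω)³`.
Here `Xs = XΣ = X₁ + X₂`, `r₁ = 1/(M·X₂)`, `r₂ = 1/(M·X₁)`. -/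
theorem local_phase_filtering_achievability
    (M X₁ X₂ Xs r₁ r₂ : ℝ) (hM : 0 < M) (hX₁ : 0 < X₁) (hX₁₂ : X₁ < X₂)
    (hXs : Xs = X₁ + X₂) (hr₁ : r₁ = 1 / (M * X₂)) (hr₂ : r₂ = 1 / (M * X₁))
    (ω : ℝ) (hω : 0 < ω) (hlo : r₁ < ω ^ 2) (hhi : ω ^ 2 < r₂) :
    ∃ c : ℂ,
      ‖(1 - c * ((X₂ : ℂ) / (Xs : ℂ)) *
        ((Complex.I * ω) ^ 2 + (r₁ : ℂ)) / (Complex.I * ω) ^ 3)‖ < 1 ∧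
      ‖(1 - -(c * ((X₁ : ℂ) / (Xs : ℂ)) *
        ((Complex.I * ω) ^ 2 + (r₂ : ℂ)) / (Complex.I * ω) ^ 3))‖ < 1 :=
  local_phase_filtering_achievability_general X₁ X₂ Xs r₁ r₂ hX₁ hX₁₂ hXs ω hω hlo hhi
end

section
/- (Decoupling identity for the estimator-based controller.) Let G_zu, G_yu, G_yd, G_zd, F, F_u, K_z be elements of a field (e.g., the field of rational functions over ℂ, or ℂ itself) with G_zd ≠ 0, G_zu = F·(G_yu + F_u), and 1 + G_zu·K_z ≠ 0. Then 1 − G_zu·(K_z·F)·(1 + (G_yu + F_u)·(K_z·F))⁻¹·G_yd·G_zd⁻¹ = 1 − (1 + G_zu·K_z)⁻¹·G_zu·K_z·(F·G_yd·G_zd⁻¹); that is, under the decoupling condition G_zu = F·(G_yu + F_u), the disturbance response ratio of the controller K = K_z·F applied through the filter loop equals 1 − (1 + G_zu·K_z)⁻¹·G_zu·K_z·M, where M = F·G_yd·G_zd⁻¹ is the complementary filtering sensitivity. -/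
/-- Decoupling identity for the estimator-based controller: in any field, if
`G_zu = F·(G_yu + F_u)` and `1 + G_zu·K_z ≠ 0`, then the disturbance response
ratio of the controller `K = K_z·F` applied through the filter loop equals
`1 − (1 + G_zu·K_z)⁻¹·G_zu·K_z·M` with `M = F·G_yd·G_zd⁻¹`. -/
theorem estimator_controller_decoupling {𝕂 : Type*} [Field 𝕂]
    (Gzu Gyu Gyd Gzd F Fu Kz : 𝕂) (hGzd : Gzd ≠ 0)
    (hdec : Gzu = F * (Gyu + Fu)) (hstab : 1 + Gzu * Kz ≠ 0) :
    1 - Gzu * (Kz * F) * (1 + (Gyu + Fu) * (Kz * F))⁻¹ * Gyd * Gzd⁻¹ =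
      1 - (1 + Gzu * Kz)⁻¹ * (Gzu * Kz) * (F * Gyd * Gzd⁻¹) := by
  have h : 1 + (Gyu + Fu) * (Kz * F) = 1 + Gzu * Kz := by ring_nf; rw [hdec]; ring
  rw [h]
  field_simp
end

section
/- (Nonnegative Bode integral for the disturbance response ratio.) Let N, D be coprime polynomials with real coefficients with deg N = deg D = n ≥ 2, equal leading coefficients and equal coefficients of degree n − 1 (so that R = N/D satisfies R(∞) = 1 and lim_{s→∞} s·(R(s) − 1) = 0, i.e., R − 1 has relative degree at least 2), and suppose every root of D has negative real part. Then the improper integral ∫₀^∞ ln |R(iω)| dω converges and equals π·Σ Re(γ), where the sum ranges over the roots γ of N with positive real part counted with multiplicity; in particular ∫₀^∞ ln |R(iω)| dω ≥ 0. -/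
/-!
Because `N` and `D` have the same leading coefficient, for every `ω` with `N(iω) ≠ 0`,
`log |R(iω)| = ∑_γ log |iω - γ| - ∑_δ log |iω - δ|` over the roots `γ` of `N` and `δ` of `D`.
With `c = a + ib`, each term has the explicit primitive
`(ω - b) (log |iω - c| - 1) + a arctan ((ω - b) / a)`, which grows like
`(T - b) (log T - 1) + π |a| / 2 - b`. The growing parts cancel between numerator and denominator,
because the equal coefficients of degrees `n` and `n - 1` give both polynomials the same number of
roots and the same sum of roots. At `ω = 0` the primitives of a real polynomial sum to `0`, its
roots being closed under conjugation. So the integral is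
`π / 2 (∑_γ |Re γ| - ∑_δ |Re δ|) = π ∑_{Re γ > 0} Re γ`, using `Re δ < 0` and
`∑ Re γ = ∑ Re δ`. It converges absolutely because `R - 1 = (N - D) / D = O(ω⁻²)`, hence
`log |R| = O(ω⁻²)`.
-/

open MeasureTheory Polynomial Filter Topology Asymptotics Real

namespace BodeIntegral

lemma natDegree_eq_of_natDegree_sub_lt {R : Type*} [Ring R] {p q : R[X]}
    (h : (p - q).natDegree < q.natDegree) : p.natDegree = q.natDegree := by
  rw [← sub_add_cancel p q, natDegree_add_eq_right_of_natDegree_lt h]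

lemma leadingCoeff_eq_of_natDegree_sub_lt {R : Type*} [Ring R] {p q : R[X]}
    (h : (p - q).natDegree < q.natDegree) : p.leadingCoeff = q.leadingCoeff := by
  rw [← sub_add_cancel p q, leadingCoeff_add_of_degree_lt (degree_lt_degree h)]

lemma nextCoeff_eq_of_natDegree_sub_add_one_lt {R : Type*} [Ring R] {p q : R[X]}
    (h : (p - q).natDegree + 1 < q.natDegree) : p.nextCoeff = q.nextCoeff := by
  have hcoeff : (p - q).coeff (q.natDegree - 1) = 0 := coeff_eq_zero_of_natDegree_lt (by omega)
  rw [coeff_sub, sub_eq_zero] at hcoeff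
  have hdeg : p.natDegree = q.natDegree := natDegree_eq_of_natDegree_sub_lt (by omega)
  rw [nextCoeff_of_natDegree_pos (by omega), nextCoeff_of_natDegree_pos (by omega), hdeg, hcoeff]

lemma roots_sum_eq_of_natDegree_sub_add_one_lt {p q : ℂ[X]}
    (h : (p - q).natDegree + 1 < q.natDegree) : p.roots.sum = q.roots.sum := by
  have hlead : p.leadingCoeff = q.leadingCoeff := leadingCoeff_eq_of_natDegree_sub_lt (by omega)
  have hp : p.leadingCoeff ≠ 0 := by
    rw [hlead, leadingCoeff_ne_zero]
    rintro rfl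
    simp at h
  have hnext := nextCoeff_eq_of_natDegree_sub_add_one_lt h
  rw [(IsAlgClosed.splits p).nextCoeff_eq_neg_sum_roots_mul_leadingCoeff,
    (IsAlgClosed.splits q).nextCoeff_eq_neg_sum_roots_mul_leadingCoeff, ← hlead] at hnext
  exact mul_left_cancel₀ (neg_ne_zero.2 hp) hnext

lemma log_norm_eval_eq_add_sum_roots {p : ℂ[X]} {z : ℂ} (hz : p.eval z ≠ 0) :
    Real.log ‖p.eval z‖ =
      Real.log ‖p.leadingCoeff‖ + (p.roots.map fun c => Real.log ‖z - c‖).sum := by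
  rw [(IsAlgClosed.splits p).eval_eq_prod_roots z] at hz ⊢
  obtain ⟨hlead, hprod⟩ := mul_ne_zero_iff.1 hz
  have hnorm := map_multiset_prod (normHom : ℂ →*₀ ℝ) (p.roots.map fun c => z - c)
  simp only [normHom_apply, Multiset.map_map, Function.comp_def] at hnorm
  rw [norm_mul, Real.log_mul (norm_ne_zero_iff.2 hlead) (norm_ne_zero_iff.2 hprod), hnorm,
    Real.log_multiset_prod, Multiset.map_map]
  · rfl
  · simp only [Multiset.mem_map]
    rintro _ ⟨c, hc, rfl⟩
    exact norm_ne_zero_iff.2 fun h => hprod (Multiset.prod_eq_zero (Multiset.mem_map.2 ⟨c, hc, h⟩))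

lemma roots_map_algebraMap_map_conj (P : ℝ[X]) :
    (P.map (algebraMap ℝ ℂ)).roots.map (starRingEnd ℂ) = (P.map (algebraMap ℝ ℂ)).roots := by
  rw [← (IsAlgClosed.splits _).roots_map_of_injective (starRingEnd ℂ).injective, Polynomial.map_map]
  congr 2
  ext r
  simp

lemma isBigO_eval_div_eval_cobounded {P Q : ℂ[X]} (hQ : Q ≠ 0) {k : ℕ}
    (h : P.natDegree + k ≤ Q.natDegree) :
    (fun z => P.eval z / Q.eval z) =O[Bornology.cobounded ℂ] fun z => (z ^ k)⁻¹ := by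
  have hO : (fun z => (X ^ k * P).eval z) =O[Bornology.cobounded ℂ] Q.eval := by
    refine isBigO_cobounded_of_degree_le ?_
    rw [degree_eq_natDegree hQ]
    refine degree_le_of_natDegree_le (natDegree_mul_le.trans ?_)
    rw [natDegree_X_pow]
    omega
  have hQz : ∀ᶠ z in Bornology.cobounded ℂ, Q.eval z ≠ 0 :=
    (eventually_cofinite_not_isRoot hQ).filter_mono (Bornology.le_cofinite ℂ)
  refine (hO.mul (isBigO_refl (fun z => (z ^ k * Q.eval z)⁻¹) _)).congr' ?_ ?_
  · filter_upwards [Bornology.eventually_ne_cobounded 0, hQz] with z hz hQz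
    simp only [eval_mul, eval_pow, eval_X]
    field_simp
  · filter_upwards [Bornology.eventually_ne_cobounded 0, hQz] with z hz hQz
    field_simp

lemma tendsto_I_mul_ofReal_atTop_cobounded :
    Tendsto (fun ω : ℝ => Complex.I * ω) atTop (Bornology.cobounded ℂ) := by
  rw [← comap_norm_atTop, tendsto_comap_iff]
  simpa [Function.comp_def] using tendsto_abs_atTop_atTop

lemma hasDerivAt_multiset_sum {ι 𝕜 F : Type*} [NontriviallyNormedField 𝕜] [NormedAddCommGroup F]
    [NormedSpace 𝕜 F] {f : ι → 𝕜 → F} {f' : ι → F} {x : 𝕜} (s : Multiset ι)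
    (h : ∀ i ∈ s, HasDerivAt (f i) (f' i) x) :
    HasDerivAt (fun y => (s.map fun i => f i y).sum) (s.map f').sum x := by
  induction s using Multiset.induction_on with
  | empty => simpa using hasDerivAt_const x (0 : F)
  | cons a s ih =>
    simp only [Multiset.map_cons, Multiset.sum_cons]
    exact (h a (Multiset.mem_cons_self a s)).add
      (ih fun i hi => h i (Multiset.mem_cons_of_mem hi))

lemma isBigO_log_norm_of_tendsto_one {α E : Type*} [SeminormedRing E] [NormOneClass E]
    {l : Filter α} {u : α → E}
    (hu : Tendsto u l (𝓝 1)) : (fun x => Real.log ‖u x‖) =O[l] fun x => u x - 1 := by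
  have hnorm : Tendsto (fun x => ‖u x‖) l (𝓝 1) := by simpa using hu.norm
  have hlog := (Real.hasDerivAt_log one_ne_zero).isBigO_sub.comp_tendsto hnorm
  simp only [Real.log_one, sub_zero, Function.comp_def] at hlog
  refine hlog.trans (IsBigO.of_bound 1 (Eventually.of_forall fun x => ?_))
  simpa using abs_norm_sub_norm_le (u x) 1

lemma integrableOn_Ioi_of_intervalIntegrable_of_isBigO {E F : Type*} [NormedAddCommGroup E]
    [NormedAddCommGroup F] {f : ℝ → E} {g : ℝ → F} {a : ℝ}
    (hf : ∀ b, IntervalIntegrable f volume a b) (ho : f =O[atTop] g)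
    (hg : IntegrableAtFilter g atTop) : IntegrableOn f (Set.Ioi a) := by
  have hloc : LocallyIntegrableOn f (Set.Ici a) := by
    refine (locallyIntegrableOn_iff isClosed_Ici.isLocallyClosed).2 fun k hk hkc => ?_
    obtain ⟨b, hb⟩ := hkc.bddAbove
    exact ((intervalIntegrable_iff_integrableOn_Icc_of_le (le_max_left a b)).1 (hf _)).mono_set
      fun x hx => ⟨hk hx, (hb hx).trans (le_max_right a b)⟩
  exact (hloc.integrableOn_of_isBigO_atTop ho hg).mono_set Set.Ioi_subset_Ici_self

lemma tendsto_mul_arctan_div (a b : ℝ) :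
    Tendsto (fun T => a * Real.arctan ((T - b) / a)) atTop (𝓝 (π / 2 * |a|)) := by
  have hT : Tendsto (fun T : ℝ => T - b) atTop atTop := tendsto_atTop_add_const_right _ _ tendsto_id
  rcases lt_trichotomy a 0 with ha | rfl | ha
  · have := ((Real.tendsto_arctan_atBot.mono_right nhdsWithin_le_nhds).comp
      ((tendsto_div_const_atBot_of_neg ha).2 hT)).const_mul a
    rwa [abs_of_neg ha, show π / 2 * -a = a * -(π / 2) by ring]
  · simp
  · have := ((Real.tendsto_arctan_atTop.mono_right nhdsWithin_le_nhds).comp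
      (hT.atTop_div_const ha)).const_mul a
    rwa [abs_of_pos ha, mul_comm]

lemma tendsto_mul_log_one_add_div_sq (t : ℝ) :
    Tendsto (fun y => y * Real.log (1 + t / y ^ 2)) atTop (𝓝 0) := by
  have h := tendsto_inv_atTop_zero.mul
    ((Real.tendsto_mul_log_one_add_div_atTop t).comp (tendsto_pow_atTop two_ne_zero))
  rw [zero_mul] at h
  refine h.congr' ?_
  filter_upwards [eventually_gt_atTop 0] with y hy
  simp only [Function.comp_apply]
  field_simp

/-- With `c = a + ib`, a primitive of `ω ↦ log ‖iω - c‖ = log (a² + (ω - b)²) / 2`. For `a = 0`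
the `arctan` term is `0 * arctan (_ / 0) = 0`, which is still the right primitive. -/
noncomputable def logNormPrimitive (c : ℂ) (ω : ℝ) : ℝ :=
  (ω - c.im) * (Real.log (c.re ^ 2 + (ω - c.im) ^ 2) / 2 - 1)
    + c.re * Real.arctan ((ω - c.im) / c.re)

lemma norm_I_mul_sub_sq (c : ℂ) (ω : ℝ) :
    ‖Complex.I * ω - c‖ ^ 2 = c.re ^ 2 + (ω - c.im) ^ 2 := by
  rw [Complex.sq_norm, Complex.normSq_apply]
  simp only [Complex.sub_re, Complex.mul_re, Complex.I_re, Complex.ofReal_re, Complex.I_im,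
    Complex.ofReal_im, Complex.sub_im, Complex.mul_im]
  ring

lemma log_norm_I_mul_sub (c : ℂ) (ω : ℝ) :
    Real.log ‖Complex.I * ω - c‖ = Real.log (c.re ^ 2 + (ω - c.im) ^ 2) / 2 := by
  rw [← norm_I_mul_sub_sq, Real.log_pow]
  push_cast
  ring

lemma continuous_logNormPrimitive (c : ℂ) : Continuous (logNormPrimitive c) := by
  by_cases hre : c.re = 0
  · have h : logNormPrimitive c = fun ω => (ω - c.im) * Real.log (ω - c.im) - (ω - c.im) := by
      ext ω
      simp only [logNormPrimitive, hre, ne_eq, OfNat.ofNat_ne_zero, not_false_eq_true, zero_pow,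
        zero_add, Real.log_pow, Nat.cast_ofNat, mul_div_cancel_left₀, div_zero, Real.arctan_zero,
        mul_zero, add_zero]
      ring
    rw [h]
    exact (Real.continuous_mul_log.comp (continuous_sub_right _)).sub (continuous_sub_right _)
  · have hpos : ∀ ω : ℝ, c.re ^ 2 + (ω - c.im) ^ 2 ≠ 0 := fun ω => by positivity
    unfold logNormPrimitive
    fun_prop (disch := exact hpos _)

lemma hasDerivAt_logNormPrimitive {c : ℂ} {ω : ℝ} (h : Complex.I * ω ≠ c) :
    HasDerivAt (logNormPrimitive c) (Real.log ‖Complex.I * ω - c‖) ω := by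
  have hq : 0 < c.re ^ 2 + (ω - c.im) ^ 2 := by
    rw [← norm_I_mul_sub_sq]
    exact pow_pos (norm_pos_iff.2 (sub_ne_zero.2 h)) 2
  have hlin : HasDerivAt (fun ω : ℝ => ω - c.im) 1 ω := (hasDerivAt_id ω).sub_const _
  have hlog := (((hlin.fun_pow 2).const_add (c.re ^ 2)).log hq.ne').div_const 2
  have harctan := ((hlin.div_const c.re).arctan).const_mul c.re
  refine ((hlin.mul (hlog.sub_const 1)).add harctan).congr_deriv ?_
  have harctan' : c.re * (1 / (1 + ((ω - c.im) / c.re) ^ 2) * (1 / c.re)) =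
      c.re ^ 2 / (c.re ^ 2 + (ω - c.im) ^ 2) := by
    rcases eq_or_ne c.re 0 with h0 | h0
    · simp [h0]
    · field_simp
  rw [log_norm_I_mul_sub, harctan']
  field_simp
  ring

lemma logNormPrimitive_conj_zero (c : ℂ) :
    logNormPrimitive (starRingEnd ℂ c) 0 = -logNormPrimitive c 0 := by
  simp only [logNormPrimitive, Complex.conj_re, Complex.conj_im, zero_sub, neg_neg, neg_div,
    Real.arctan_neg, neg_sq]
  ring

lemma tendsto_logNormPrimitive_sub (c : ℂ) :
    Tendsto (fun T => logNormPrimitive c T - (T - c.im) * (Real.log T - 1)) atTop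
      (𝓝 (π / 2 * |c.re| - c.im)) := by
  -- With `c = a + ib` and `T > max b 0`, `(T - b) (log ‖iT - c‖ - log T)` splits as
  -- `(T - b) / 2 * log (1 + a² / (T - b)²) + (1 - b / T) * (T * log (1 - b / T))`.
  have hT : Tendsto (fun T : ℝ => T - c.im) atTop atTop :=
    tendsto_atTop_add_const_right _ _ tendsto_id
  have h1 := ((tendsto_mul_log_one_add_div_sq (c.re ^ 2)).comp hT).div_const 2
  have h2 := ((tendsto_const_nhds (x := (1 : ℝ))).sub
    ((tendsto_const_nhds (x := c.im)).div_atTop tendsto_id)).mul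
    (Real.tendsto_mul_log_one_add_div_atTop (-c.im))
  have h3 := tendsto_mul_arctan_div c.re c.im
  convert ((h1.add h2).add h3).congr' ?_ using 2
  · ring
  filter_upwards [eventually_gt_atTop (max c.im 0)] with T hTlarge
  have hT0 : 0 < T := (le_max_right _ _).trans_lt hTlarge
  have hTb : 0 < T - c.im := sub_pos.2 ((le_max_left _ _).trans_lt hTlarge)
  have e1 : 1 + c.re ^ 2 / (T - c.im) ^ 2 = (c.re ^ 2 + (T - c.im) ^ 2) / (T - c.im) ^ 2 := by
    field_simp
    ring
  have e2 : 1 + -c.im / T = (T - c.im) / T := by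
    field_simp
    ring
  simp only [Function.comp_apply, id, logNormPrimitive, e1, e2,
    Real.log_div (by positivity : c.re ^ 2 + (T - c.im) ^ 2 ≠ 0)
      (by positivity : (T - c.im) ^ 2 ≠ 0),
    Real.log_div hTb.ne' hT0.ne', Real.log_pow]
  field_simp
  ring

noncomputable def bodePrimitive (P Q : ℂ[X]) (ω : ℝ) : ℝ :=
  (P.roots.map fun c => logNormPrimitive c ω).sum - (Q.roots.map fun c => logNormPrimitive c ω).sum

lemma continuous_bodePrimitive (P Q : ℂ[X]) : Continuous (bodePrimitive P Q) :=
  (continuous_multiset_sum _ fun c _ => continuous_logNormPrimitive c).sub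
    (continuous_multiset_sum _ fun c _ => continuous_logNormPrimitive c)

lemma hasDerivAt_bodePrimitive {P Q : ℂ[X]} {ω : ℝ} (hlead : P.leadingCoeff = Q.leadingCoeff)
    (hP : P.eval (Complex.I * ω) ≠ 0) (hQ : Q.eval (Complex.I * ω) ≠ 0) :
    HasDerivAt (bodePrimitive P Q)
      (Real.log ‖P.eval (Complex.I * ω) / Q.eval (Complex.I * ω)‖) ω := by
  have hderiv : ∀ {p : ℂ[X]}, p.eval (Complex.I * ω) ≠ 0 →
      HasDerivAt (fun ω => (p.roots.map fun c => logNormPrimitive c ω).sum)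
        (p.roots.map fun c => Real.log ‖Complex.I * ω - c‖).sum ω :=
    fun hp => hasDerivAt_multiset_sum _ fun c hc =>
      hasDerivAt_logNormPrimitive fun h => hp (h ▸ (mem_roots'.1 hc).2)
  refine ((hderiv hP).sub (hderiv hQ)).congr_deriv ?_
  rw [norm_div, Real.log_div (norm_ne_zero_iff.2 hP) (norm_ne_zero_iff.2 hQ),
    log_norm_eval_eq_add_sum_roots hP, log_norm_eval_eq_add_sum_roots hQ, hlead]
  ring

lemma tendsto_bodePrimitive {P Q : ℂ[X]} (hdeg : P.natDegree = Q.natDegree)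
    (hsum : P.roots.sum = Q.roots.sum) :
    Tendsto (bodePrimitive P Q) atTop
      (𝓝 ((P.roots.map fun c => π / 2 * |c.re| - c.im).sum -
        (Q.roots.map fun c => π / 2 * |c.re| - c.im).sum)) := by
  have hgrowth : ∀ (s : Multiset ℂ) (T : ℝ),
      (s.map fun c => (T - c.im) * (Real.log T - 1)).sum =
        (Multiset.card s * T - s.sum.im) * (Real.log T - 1) := by
    intro s T
    induction s using Multiset.induction_on with
    | empty => simp
    | cons a s ih =>
      simp only [Multiset.map_cons, Multiset.sum_cons, Multiset.card_cons, ih, Complex.add_im]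
      push_cast
      ring
  refine ((tendsto_multiset_sum _ fun c _ => tendsto_logNormPrimitive_sub c).sub
    (tendsto_multiset_sum _ fun c _ => tendsto_logNormPrimitive_sub c)).congr fun T => ?_
  simp only [bodePrimitive, Multiset.sum_map_sub, hgrowth, IsAlgClosed.card_roots_eq_natDegree,
    hdeg, hsum]
  ring

lemma bodePrimitive_map_algebraMap_zero (N D : ℝ[X]) :
    bodePrimitive (N.map (algebraMap ℝ ℂ)) (D.map (algebraMap ℝ ℂ)) 0 = 0 := by
  have hsum : ∀ P : ℝ[X],
      ((P.map (algebraMap ℝ ℂ)).roots.map fun c => logNormPrimitive c 0).sum = 0 := by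
    intro P
    have h := congrArg (fun s => (s.map fun c => logNormPrimitive c 0).sum)
      (roots_map_algebraMap_map_conj P)
    simp only [Multiset.map_map, Function.comp_def, logNormPrimitive_conj_zero,
      Multiset.sum_map_neg] at h
    linarith
  simp [bodePrimitive, hsum]

lemma analyticAt_eval_I_mul (P : ℂ[X]) (x : ℝ) :
    AnalyticAt ℝ (fun ω : ℝ => P.eval (Complex.I * ω)) x := by
  have h : AnalyticAt ℝ (fun ω : ℝ => Complex.I * ω) x :=
    analyticAt_const.mul (Complex.ofRealCLM.analyticAt x)
  simpa using h.aeval_polynomial P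

lemma intervalIntegrable_log_norm_div (P Q : ℂ[X]) (a b : ℝ) :
    IntervalIntegrable (fun ω : ℝ => Real.log ‖P.eval (Complex.I * ω) / Q.eval (Complex.I * ω)‖)
      volume a b := by
  have hP : AnalyticOnNhd ℝ (fun ω : ℝ => P.eval (Complex.I * ω)) (Set.uIcc a b) :=
    fun x _ => analyticAt_eval_I_mul P x
  have hQ : AnalyticOnNhd ℝ (fun ω : ℝ => Q.eval (Complex.I * ω)) (Set.uIcc a b) :=
    fun x _ => analyticAt_eval_I_mul Q x
  exact (hP.meromorphicOn.div hQ.meromorphicOn).intervalIntegrable_log_norm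

lemma integral_log_norm_div {P Q : ℂ[X]} (hP : P ≠ 0) (hlead : P.leadingCoeff = Q.leadingCoeff)
    (hQ : ∀ ω : ℝ, Q.eval (Complex.I * ω) ≠ 0) (a b : ℝ) :
    ∫ ω in a..b, Real.log ‖P.eval (Complex.I * ω) / Q.eval (Complex.I * ω)‖ =
      bodePrimitive P Q b - bodePrimitive P Q a := by
  have hzeros : {ω : ℝ | P.eval (Complex.I * ω) = 0}.Countable := by
    refine ((P.roots.toFinset.finite_toSet.preimage (f := fun ω : ℝ => Complex.I * ω)
      fun x _ y _ h => ?_).subset fun ω hω => ?_).countable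
    · simpa using h
    · simpa [mem_roots hP] using hω
  exact integral_eq_of_hasDerivAt_off_countable _ _ hzeros
    (continuous_bodePrimitive P Q).continuousOn
    (fun ω hω => hasDerivAt_bodePrimitive hlead hω.2 (hQ ω))
    (intervalIntegrable_log_norm_div P Q a b)

lemma integrableOn_Ioi_log_norm_div {P Q : ℂ[X]} (hrel : (P - Q).natDegree + 2 ≤ Q.natDegree)
    (hQ : ∀ ω : ℝ, Q.eval (Complex.I * ω) ≠ 0) :
    IntegrableOn (fun ω : ℝ => Real.log ‖P.eval (Complex.I * ω) / Q.eval (Complex.I * ω)‖)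
      (Set.Ioi 0) := by
  have hQ0 : Q ≠ 0 := fun h => hQ 0 (by simp [h])
  have hsub : (fun ω : ℝ => P.eval (Complex.I * ω) / Q.eval (Complex.I * ω) - 1) =
      fun ω : ℝ => (P - Q).eval (Complex.I * ω) / Q.eval (Complex.I * ω) := by
    ext ω
    rw [eval_sub, sub_div, div_self (hQ ω)]
  have hO : (fun ω : ℝ => P.eval (Complex.I * ω) / Q.eval (Complex.I * ω) - 1) =O[atTop]
      fun ω : ℝ => ω ^ (-2 : ℝ) := by
    rw [hsub]
    refine ((isBigO_eval_div_eval_cobounded hQ0 hrel).comp_tendsto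
      tendsto_I_mul_ofReal_atTop_cobounded).trans (IsBigO.of_bound 1 ?_)
    filter_upwards [eventually_gt_atTop 0] with ω hω
    simp [Real.rpow_neg hω.le, abs_of_pos hω]
  have hlim : Tendsto (fun ω : ℝ => P.eval (Complex.I * ω) / Q.eval (Complex.I * ω)) atTop
      (𝓝 1) := by
    simpa using (hO.trans_tendsto (tendsto_rpow_neg_atTop two_pos)).add_const 1
  exact integrableOn_Ioi_of_intervalIntegrable_of_isBigO
    (fun b => intervalIntegrable_log_norm_div P Q 0 b)
    ((isBigO_log_norm_of_tendsto_one hlim).trans hO)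
    (integrableAtFilter_rpow_atTop_iff.2 (by norm_num))

theorem integral_Ioi_log_norm_div {P Q : ℂ[X]} (hrel : (P - Q).natDegree + 2 ≤ Q.natDegree)
    (hQ : ∀ ω : ℝ, Q.eval (Complex.I * ω) ≠ 0) :
    ∫ ω in Set.Ioi (0 : ℝ), Real.log ‖P.eval (Complex.I * ω) / Q.eval (Complex.I * ω)‖ =
      (P.roots.map fun c => π / 2 * |c.re| - c.im).sum -
        (Q.roots.map fun c => π / 2 * |c.re| - c.im).sum - bodePrimitive P Q 0 := by
  have hdeg : P.natDegree = Q.natDegree := natDegree_eq_of_natDegree_sub_lt (by omega)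
  have hP : P ≠ 0 := ne_zero_of_natDegree_gt (n := 0) (by omega)
  have hlim := (tendsto_bodePrimitive hdeg
    (roots_sum_eq_of_natDegree_sub_add_one_lt (by omega))).sub_const (bodePrimitive P Q 0)
  refine tendsto_nhds_unique
    (intervalIntegral_tendsto_integral_Ioi 0 (integrableOn_Ioi_log_norm_div hrel hQ) tendsto_id)
    (hlim.congr fun T => ?_)
  exact (integral_log_norm_div hP (leadingCoeff_eq_of_natDegree_sub_lt (by omega)) hQ 0 T).symm

lemma sum_map_pi_div_two_mul_abs_re_sub_im (s : Multiset ℂ) :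
    (s.map fun c => π / 2 * |c.re| - c.im).sum =
      π * ((s.filter fun z => 0 < z.re).map Complex.re).sum - (π / 2 * s.sum.re + s.sum.im) := by
  induction s using Multiset.induction_on with
  | empty => simp
  | cons a s ih =>
    simp only [Multiset.map_cons, Multiset.sum_cons, Multiset.filter_cons, ih, Complex.add_re,
      Complex.add_im]
    split_ifs with ha
    · simp only [abs_of_pos ha, Multiset.singleton_add, Multiset.map_cons, Multiset.sum_cons]
      ring
    · simp only [abs_of_nonpos (not_lt.1 ha), zero_add]
      ring

end BodeIntegral

open BodeIntegral

theorem bode_integral_disturbance_response_ratio_general (n : ℕ) (hn : 2 ≤ n)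
    (N D : Polynomial ℝ)
    (hNdeg : N.natDegree = n) (hDdeg : D.natDegree = n)
    (hlead : N.coeff n = D.coeff n) (hnext : N.coeff (n - 1) = D.coeff (n - 1))
    (hstab : ∀ z ∈ (D.map (algebraMap ℝ ℂ)).roots, z.re < 0) :
    IntegrableOn
      (fun ω : ℝ => Real.log (Norm.norm
        ((N.map (algebraMap ℝ ℂ)).eval (Complex.I * ω) /
         (D.map (algebraMap ℝ ℂ)).eval (Complex.I * ω)))) (Set.Ioi 0) ∧
    ∫ ω in Set.Ioi (0 : ℝ), Real.log (Norm.norm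
        ((N.map (algebraMap ℝ ℂ)).eval (Complex.I * ω) /
         (D.map (algebraMap ℝ ℂ)).eval (Complex.I * ω))) =
      Real.pi *
        ((((N.map (algebraMap ℝ ℂ)).roots.filter (fun z => 0 < z.re)).map Complex.re).sum) ∧
    0 ≤ ∫ ω in Set.Ioi (0 : ℝ), Real.log (Norm.norm
        ((N.map (algebraMap ℝ ℂ)).eval (Complex.I * ω) /
         (D.map (algebraMap ℝ ℂ)).eval (Complex.I * ω))) := by
  set P := N.map (algebraMap ℝ ℂ)
  set Q := D.map (algebraMap ℝ ℂ)
  have hrel : (P - Q).natDegree + 2 ≤ Q.natDegree := by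
    have h : (N - D).natDegree ≤ n - 2 := natDegree_le_iff_coeff_eq_zero.2 fun m hm => by
      rw [coeff_sub, sub_eq_zero]
      obtain rfl | rfl | hm := (by omega : m = n - 1 ∨ m = n ∨ n < m)
      · exact hnext
      · exact hlead
      · rw [coeff_eq_zero_of_natDegree_lt (hNdeg ▸ hm), coeff_eq_zero_of_natDegree_lt (hDdeg ▸ hm)]
    simp only [P, Q, ← Polynomial.map_sub, natDegree_map]
    omega
  have hQ : ∀ ω : ℝ, Q.eval (Complex.I * ω) ≠ 0 := fun ω hω => by
    have hQ0 : Q ≠ 0 := ne_zero_of_natDegree_gt (n := 0) (by omega)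
    simpa using hstab _ (mem_roots'.2 ⟨hQ0, hω⟩)
  have hpos : 0 ≤ ((P.roots.filter fun z => 0 < z.re).map Complex.re).sum :=
    Multiset.sum_nonneg fun x hx => by
      obtain ⟨z, hz, rfl⟩ := Multiset.mem_map.1 hx
      exact (Multiset.mem_filter.1 hz).2.le
  refine ⟨integrableOn_Ioi_log_norm_div hrel hQ, ?_⟩
  rw [integral_Ioi_log_norm_div hrel hQ, bodePrimitive_map_algebraMap_zero,
    sum_map_pi_div_two_mul_abs_re_sub_im, sum_map_pi_div_two_mul_abs_re_sub_im,
    roots_sum_eq_of_natDegree_sub_add_one_lt (p := P) (q := Q) (by omega),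
    Multiset.filter_eq_nil.2 fun z hz => (hstab z hz).not_gt]
  simp only [Multiset.map_zero, Multiset.sum_zero]
  exact ⟨by ring, by linarith [mul_nonneg pi_pos.le hpos]⟩

/-- Nonnegative Bode integral for the disturbance response ratio: if `R = N/D`
with `N, D` coprime real polynomials of equal degree `n ≥ 2`, equal leading
coefficients and equal coefficients in degree `n − 1` (so `R(∞) = 1` and `R − 1`
has relative degree at least 2), and all roots of `D` lie in the open left
half-plane, then `∫₀^∞ ln |R(iω)| dω` converges, equals `π·Σ Re(γ)` over the
open right half-plane roots `γ` of `N` with multiplicity, and is nonnegative. -/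
theorem bode_integral_disturbance_response_ratio (n : ℕ) (hn : 2 ≤ n)
    (N D : Polynomial ℝ) (hcop : IsCoprime N D)
    (hNdeg : N.natDegree = n) (hDdeg : D.natDegree = n)
    (hlead : N.coeff n = D.coeff n) (hnext : N.coeff (n - 1) = D.coeff (n - 1))
    (hstab : ∀ z ∈ (D.map (algebraMap ℝ ℂ)).roots, z.re < 0) :
    IntegrableOn
      (fun ω : ℝ => Real.log (Norm.norm
        ((N.map (algebraMap ℝ ℂ)).eval (Complex.I * ω) /
         (D.map (algebraMap ℝ ℂ)).eval (Complex.I * ω)))) (Set.Ioi 0) ∧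
    ∫ ω in Set.Ioi (0 : ℝ), Real.log (Norm.norm
        ((N.map (algebraMap ℝ ℂ)).eval (Complex.I * ω) /
         (D.map (algebraMap ℝ ℂ)).eval (Complex.I * ω))) =
      Real.pi *
        ((((N.map (algebraMap ℝ ℂ)).roots.filter (fun z => 0 < z.re)).map Complex.re).sum) ∧
    0 ≤ ∫ ω in Set.Ioi (0 : ℝ), Real.log (Norm.norm
        ((N.map (algebraMap ℝ ℂ)).eval (Complex.I * ω) /
         (D.map (algebraMap ℝ ℂ)).eval (Complex.I * ω))) :=
  bode_integral_disturbance_response_ratio_general n hn N D hNdeg hDdeg hlead hnext hstab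
end
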